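/- Let G be a graph that admits a proper edge-coloring under which G is rainbow C_4-free, let v be a vertex of G, and let k ≥ 5. Then the neighborhood N(v) does not contain a k-cycle with a pendant edge; that is, there do not exist k+1 distinct vertices v_1, ..., v_k, v_{k+1} ∈ N(v) such that v_1v_2, v_2v_3, ..., v_{k−1}v_k, v_kv_1 and v_kv_{k+1} are all edges of G. -/

import Mathlib

/-!
Write `a i = c s(v, w i)` for the spoke colors and `b i = c s(w i, w (i + 1))` for the rim
colors. The 4-cycle `v, w i, w (i+1), w (i+2)` is not rainbow and adjacent edges get distinct
colors, so `a i = b (i + 1)` or `b i = a (i + 2)`. Since the `a i` are distinct and `3 ≠ 0` in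
`ZMod k`, the first alternative propagates from `i` to `i + 1`; hence one alternative holds all
around the cycle and every rim color is a spoke color. So `c s(v, p)`, which differs from every
spoke color, is no rim color, and the non-rainbow 4-cycles `v, p, w 0, w 1` and
`w 0, p, v, w (-1)` force `a 1 = c s(w 0, p) = a (-1)`, although `1 ≠ -1`.
-/

/-- A proper edge-coloring: any two distinct edges of `G` sharing a vertex
receive different colors. -/
def ProperEdgeColoring {V : Type*} (G : SimpleGraph V) (c : Sym2 V → ℕ) : Prop :=
  ∀ e₁ ∈ G.edgeSet, ∀ e₂ ∈ G.edgeSet, e₁ ≠ e₂ → (∃ v, v ∈ e₁ ∧ v ∈ e₂) → c e₁ ≠ c e₂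

/-- `G` contains a rainbow copy of the cycle `C_k` under the edge-coloring `c`:
there are `k` distinct vertices, cyclically consecutive ones adjacent, whose
`k` cycle edges receive pairwise distinct colors. -/
def HasRainbowCycle {V : Type*} (G : SimpleGraph V) (c : Sym2 V → ℕ) (k : ℕ) : Prop :=
  ∃ f : ZMod k → V, Function.Injective f ∧ (∀ i, G.Adj (f i) (f (i + 1))) ∧
    Function.Injective (fun i : ZMod k => c s(f i, f (i + 1)))

/-- `G` is (properly) rainbow `C_k`-saturated: some proper edge-coloring of `G`
has no rainbow `C_k`-copy, but for every pair of nonadjacent vertices `x, y`,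
every proper edge-coloring of `G + xy` contains a rainbow `C_k`-copy. -/
def RainbowSat {V : Type*} (G : SimpleGraph V) (k : ℕ) : Prop :=
  (∃ c, ProperEdgeColoring G c ∧ ¬ HasRainbowCycle G c k) ∧
  ∀ x y : V, x ≠ y → ¬ G.Adj x y →
    ∀ c, ProperEdgeColoring (G ⊔ SimpleGraph.fromEdgeSet {s(x, y)}) c →
      HasRainbowCycle (G ⊔ SimpleGraph.fromEdgeSet {s(x, y)}) c k

theorem ZMod.ofNat_ne_zero_of_lt {n a : ℕ} [a.AtLeastTwo] (h : a < n) :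
    (ofNat(a) : ZMod n) ≠ 0 := fun h0 => by
  simpa [h0] using ZMod.val_ofNat_of_lt h

theorem ZMod.forall_of_imp_add_one {k : ℕ} [NeZero k] {P : ZMod k → Prop}
    (hstep : ∀ i, P i → P (i + 1)) {j : ZMod k} (hj : P j) (i : ZMod k) : P i := by
  have hP : ∀ n : ℕ, P (j + n) := by
    intro n
    induction n with
    | zero => simpa using hj
    | succ n ih => simpa [add_assoc] using hstep _ ih
  simpa using hP (i - j).val

theorem ZMod.exists_eq_of_eq_or_eq {α : Type*} {k : ℕ} [NeZero k] (h3 : (3 : ZMod k) ≠ 0)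
    {a b : ZMod k → α} (ha : Function.Injective a)
    (hstep : ∀ i, a i = b (i + 1) ∨ b i = a (i + 2)) (i : ZMod k) : ∃ j, b i = a j := by
  by_cases hfirst : ∃ j, a j = b (j + 1)
  · obtain ⟨j, hj⟩ := hfirst
    have hprop : ∀ i, a i = b (i + 1) → a (i + 1) = b (i + 1 + 1) := fun i hi =>
      (hstep (i + 1)).resolve_right fun h => h3 <| by
        linear_combination (ha (hi.trans h)).symm
    exact ⟨i - 1, by simpa using (ZMod.forall_of_imp_add_one hprop hj (i - 1)).symm⟩
  · exact ⟨i + 2, (hstep i).resolve_left (not_exists.mp hfirst i)⟩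

namespace ProperEdgeColoring

variable {V : Type*} {G : SimpleGraph V} {c : Sym2 V → ℕ}

theorem color_ne (hc : ProperEdgeColoring G c) {x y z : V} (hxy : G.Adj x y) (hxz : G.Adj x z)
    (hyz : y ≠ z) : c s(x, y) ≠ c s(x, z) :=
  hc _ hxy _ hxz (Sym2.congr_right.not.mpr hyz) ⟨x, Sym2.mem_mk_left x y, Sym2.mem_mk_left x z⟩

theorem color_eq_or_color_eq_of_not_hasRainbowCycle_four (hc : ProperEdgeColoring G c)
    (hfree : ¬ HasRainbowCycle G c 4) {x y z t : V} (hxy : G.Adj x y) (hyz : G.Adj y z)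
    (hzt : G.Adj z t) (htx : G.Adj t x) (hxz : x ≠ z) (hyt : y ≠ t) :
    c s(x, y) = c s(z, t) ∨ c s(y, z) = c s(t, x) := by
  by_contra! hopp
  have := hc.color_ne hxy.symm hyz hxz
  have := hc.color_ne hyz.symm hzt hyt
  have := hc.color_ne hzt.symm htx hxz.symm
  have := hc.color_ne htx.symm hxy hyt.symm
  have := hxy.ne; have := hyz.ne; have := hzt.ne; have := htx.ne
  -- `ZMod 4` is `Fin 4` by definition, where `fin_cases` and `simp` compute.
  refine hfree ⟨![x, y, z, t], ?_, ?_, ?_⟩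
  · change Function.Injective (![x, y, z, t] : Fin 4 → V)
    intro i j h
    fin_cases i <;> fin_cases j <;> simp_all [eq_comm]
  · change ∀ i : Fin 4, G.Adj (![x, y, z, t] i) (![x, y, z, t] (i + 1))
    simp [Fin.forall_fin_succ, *]
  · change Function.Injective fun i : Fin 4 => c s(![x, y, z, t] i, ![x, y, z, t] (i + 1))
    intro i j h
    fin_cases i <;> fin_cases j <;> simp_all [eq_comm, Sym2.eq_swap]

theorem injective_spoke_color (hc : ProperEdgeColoring G c) {ι : Type*} {v : V} {w : ι → V}
    (hw : Function.Injective w) (hvw : ∀ i, G.Adj v (w i)) :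
    Function.Injective fun i => c s(v, w i) := fun i j h =>
  hw <| by_contra fun hij => hc.color_ne (hvw i) (hvw j) hij h

theorem exists_spoke_color_eq_rim_color (hc : ProperEdgeColoring G c)
    (hfree : ¬ HasRainbowCycle G c 4) {k : ℕ} [NeZero k] (h2 : (2 : ZMod k) ≠ 0)
    (h3 : (3 : ZMod k) ≠ 0) {v : V} {w : ZMod k → V} (hw : Function.Injective w)
    (hvw : ∀ i, G.Adj v (w i)) (hcyc : ∀ i, G.Adj (w i) (w (i + 1))) (i : ZMod k) :
    ∃ j, c s(w i, w (i + 1)) = c s(v, w j) := by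
  refine ZMod.exists_eq_of_eq_or_eq (b := fun i => c s(w i, w (i + 1))) h3
    (hc.injective_spoke_color hw hvw) (fun i => ?_) i
  have hw2 : w i ≠ w (i + 2) := fun h => h2 (by linear_combination (hw h).symm)
  rw [add_assoc, one_add_one_eq_two, Sym2.eq_swap (a := v) (b := w (i + 2))]
  exact hc.color_eq_or_color_eq_of_not_hasRainbowCycle_four hfree (hvw i) (hcyc i)
    (by simpa [add_assoc, one_add_one_eq_two] using hcyc (i + 1)) (hvw (i + 2)).symm
    (hvw (i + 1)).ne hw2

end ProperEdgeColoring

/-- If `G` admits a proper edge-coloring with no rainbow `C₄`-copy, then for any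
vertex `v` and any `k ≥ 5`, the neighborhood `N(v)` does not contain a `k`-cycle
with a pendant edge. The cycle is given by an injective `w : ZMod k → V` and the
pendant vertex `p` is attached to the cycle vertex `w 0`. -/
theorem no_cycle_with_pendant_in_nbhd {V : Type*} (G : SimpleGraph V)
    (c : Sym2 V → ℕ) (hc : ProperEdgeColoring G c) (hfree : ¬ HasRainbowCycle G c 4)
    (v : V) (k : ℕ) (hk : 5 ≤ k) :
    ¬ ∃ (w : ZMod k → V) (p : V),
        Function.Injective w ∧ (∀ i, p ≠ w i) ∧
        (∀ i, G.Adj v (w i)) ∧ G.Adj v p ∧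
        (∀ i, G.Adj (w i) (w (i + 1))) ∧ G.Adj (w 0) p := by
  rintro ⟨w, p, hw, hpw, hvw, hvp, hcyc, hw0p⟩
  have : NeZero k := ⟨by omega⟩
  have h2 : (2 : ZMod k) ≠ 0 := ZMod.ofNat_ne_zero_of_lt (a := 2) (by omega)
  have h3 : (3 : ZMod k) ≠ 0 := ZMod.ofNat_ne_zero_of_lt (a := 3) (by omega)
  have hspoke := hc.injective_spoke_color hw hvw
  have hpendant : ∀ i, c s(v, p) ≠ c s(w i, w (i + 1)) := fun i h => by
    obtain ⟨j, hj⟩ := hc.exists_spoke_color_eq_rim_color hfree h2 h3 hw hvw hcyc i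
    exact hc.color_ne hvp (hvw j) (hpw j) (h.trans hj)
  have hq1 : c s(w 0, p) = c s(v, w 1) := by
    have h := (hc.color_eq_or_color_eq_of_not_hasRainbowCycle_four hfree hvp hw0p.symm (hcyc 0)
      (hvw (0 + 1)).symm (hvw 0).ne (hpw _)).resolve_left (hpendant 0)
    rwa [zero_add, Sym2.eq_swap (a := p), Sym2.eq_swap (a := w 1)] at h
  have hq2 : c s(w 0, p) = c s(v, w (-1)) := by
    have h := hc.color_eq_or_color_eq_of_not_hasRainbowCycle_four hfree hw0p hvp.symm (hvw (-1))
      (by simpa using hcyc (-1)) (hvw 0).ne.symm (hpw _)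
    refine h.resolve_right fun h' => hpendant (-1) ?_
    rwa [neg_add_cancel, Sym2.eq_swap (a := v)]
  exact h2 (by linear_combination -hspoke (hq2.symm.trans hq1))
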